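/- If two finite simple graphs G and H have the same chromatic symmetric function, then Σ_{v∈V(G)} d(v)² = Σ_{v∈V(H)} d(v)², where d(v) denotes the degree of vertex v. -/

import Mathlib

/-!
The coefficient of `x^m` in `csf G n` counts the proper colourings whose colour classes have sizes
`m`. With `|V| - 1` colours and sizes `(2, 1, …, 1)` such a colouring is an independent pair of
vertices (a non-edge) together with a bijection from the other vertices to the other colours; with
`|V| - 2` colours and sizes `(2, 2, 1, …, 1)` it is an ordered pair of disjoint non-edges together
with such a bijection. So `csf` determines `|V|`, the number `a` of non-edges and the number `D` of
ordered pairs of disjoint non-edges. The non-degree `d'(v) = |V| - 1 - d(v)` counts the non-edges at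
`v`, so `∑ d' = 2a`, and counting pairs of non-edges by their common vertices gives
`∑ d'² + D = a² + a`; together these determine `∑ d²`.
-/

open SimpleGraph

/- The chromatic symmetric function of `G`, specialized to the `n` variables
`x_0, …, x_{n-1}`: the sum, over all proper colorings `κ : V → Fin n`, of
`∏_{v} x_{κ v}`.  Two graphs have the same chromatic symmetric function iff
these specializations agree for every `n`. -/
open scoped Classical in
noncomputable def csf {V : Type*} [Fintype V] (G : SimpleGraph V) (n : ℕ) :
    MvPolynomial (Fin n) ℤ :=
  ∑ κ : V → Fin n,
    if ∀ u w, G.Adj u w → κ u ≠ κ w then ∏ v, MvPolynomial.X (κ v) else 0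

open Finset
open scoped Nat

namespace Finset

variable {α : Type*} [DecidableEq α]

theorem card_inter_add_ite_disjoint {p q : Finset α} (hp : #p = 2) (hq : #q = 2) :
    #(p ∩ q) + (if Disjoint p q then 1 else 0) = 1 + if p = q then 1 else 0 := by
  by_cases hpq : p = q
  · subst hpq
    have : p.Nonempty := card_pos.1 (by omega)
    simp [hp, this.ne_empty]
  · have hle : #(p ∩ q) ≤ 1 := by
      by_contra! h2
      have hp' : p ∩ q = p := eq_of_subset_of_card_le inter_subset_left (by omega)
      have hq' : p ∩ q = q := eq_of_subset_of_card_le inter_subset_right (by omega)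
      exact hpq (hp'.symm.trans hq')
    have hdisj : Disjoint p q ↔ #(p ∩ q) = 0 := by
      rw [disjoint_iff_inter_eq_empty, card_eq_zero]
    split_ifs <;> grind

variable [Fintype α]

theorem sum_card_filter_mem_eq_sum_card {ι : Type*} (s : Finset ι) (f : ι → Finset α) :
    ∑ v, #{i ∈ s | v ∈ f i} = ∑ i ∈ s, #(f i) := by
  simp only [card_filter]
  rw [sum_comm]
  simp

theorem sum_card_filter_mem_sq_add_card_filter_disjoint (𝓔 : Finset (Finset α))
    (h𝓔 : ∀ p ∈ 𝓔, #p = 2) :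
    ∑ v, #{p ∈ 𝓔 | v ∈ p} ^ 2 + #{pq ∈ 𝓔 ×ˢ 𝓔 | Disjoint pq.1 pq.2} = #𝓔 ^ 2 + #𝓔 := by
  have hsq (v : α) : #{p ∈ 𝓔 | v ∈ p} ^ 2 = #{pq ∈ 𝓔 ×ˢ 𝓔 | v ∈ pq.1 ∩ pq.2} := by
    rw [sq, ← card_product, ← filter_product]
    simp only [mem_inter]
  calc ∑ v, #{p ∈ 𝓔 | v ∈ p} ^ 2 + #{pq ∈ 𝓔 ×ˢ 𝓔 | Disjoint pq.1 pq.2}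
      = ∑ pq ∈ 𝓔 ×ˢ 𝓔, (#(pq.1 ∩ pq.2) + if Disjoint pq.1 pq.2 then 1 else 0) := by
        rw [sum_congr rfl fun v _ => hsq v, sum_card_filter_mem_eq_sum_card, card_filter,
          sum_add_distrib]
    _ = ∑ pq ∈ 𝓔 ×ˢ 𝓔, (1 + if pq.1 = pq.2 then 1 else 0) := by
        refine sum_congr rfl fun pq hpq => ?_
        rw [mem_product] at hpq
        exact card_inter_add_ite_disjoint (h𝓔 _ hpq.1) (h𝓔 _ hpq.2)
    _ = #𝓔 ^ 2 + #𝓔 := by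
        rw [sum_add_distrib, sum_product (f := fun pq => if pq.1 = pq.2 then 1 else 0)]
        simp only [sum_ite_eq, sum_const, card_product, smul_eq_mul, mul_one, sq]
        rw [sum_ite_mem, inter_self, card_eq_sum_ones]

theorem sum_card_filter_mem_of_card_eq_two (𝓔 : Finset (Finset α)) (h𝓔 : ∀ p ∈ 𝓔, #p = 2) :
    ∑ v, #{p ∈ 𝓔 | v ∈ p} = 2 * #𝓔 := by
  rw [sum_card_filter_mem_eq_sum_card, sum_congr rfl h𝓔, sum_const, smul_eq_mul, mul_comm]

end Finset

namespace SimpleGraph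

variable {V : Type*} [Fintype V] [DecidableEq V]

theorem card_filter_mem_cliqueFinset_two (Γ : SimpleGraph V) [DecidableRel Γ.Adj] (v : V) :
    #{s ∈ Γ.cliqueFinset 2 | v ∈ s} = Γ.degree v := by
  rw [← card_neighborFinset_eq_degree]
  symm
  refine card_nbij (fun w => {v, w}) (fun w hw => ?_) (fun a ha b hb hab => ?_) (fun s hs => ?_)
  · have hvw : Γ.Adj v w := (mem_neighborFinset _ _ _).1 hw
    simp [isNClique_iff, card_pair hvw.ne, hvw]
  · have : b ∈ ({v, a} : Finset V) := (congrArg (b ∈ ·) hab).mpr (by simp)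
    simp only [coe_neighborFinset, mem_neighborSet] at ha hb
    simp only [mem_insert, mem_singleton] at this
    exact (this.resolve_left hb.ne').symm
  · simp only [coe_filter, mem_cliqueFinset_iff, isNClique_iff, Set.mem_ofPred_eq] at hs
    obtain ⟨⟨hcl, hcard⟩, hv⟩ := hs
    obtain ⟨a, b, hab, rfl⟩ := card_eq_two.1 hcard
    rw [coe_pair] at hcl
    simp only [mem_insert, mem_singleton] at hv
    rcases hv with rfl | rfl
    · exact ⟨b, by simpa using isClique_pair.1 hcl hab, rfl⟩
    · exact ⟨a, by simpa [adj_comm] using isClique_pair.1 hcl hab, pair_comm _ _⟩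

theorem indepSetFinset_eq_cliqueFinset_compl (G : SimpleGraph V) [DecidableRel G.Adj] (n : ℕ) :
    G.indepSetFinset n = Gᶜ.cliqueFinset n := by
  ext s
  simp

theorem card_filter_mem_indepSetFinset_two_add_degree (G : SimpleGraph V) [DecidableRel G.Adj]
    (v : V) : #{s ∈ G.indepSetFinset 2 | v ∈ s} + G.degree v = Fintype.card V - 1 := by
  rw [indepSetFinset_eq_cliqueFinset_compl, card_filter_mem_cliqueFinset_two, degree_compl]
  have := G.degree_lt_card_verts v
  omega

def disjointIndepPairs (G : SimpleGraph V) [DecidableRel G.Adj] :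
    Finset (Finset V × Finset V) :=
  {pq ∈ G.indepSetFinset 2 ×ˢ G.indepSetFinset 2 | Disjoint pq.1 pq.2}

@[simp] theorem mem_disjointIndepPairs {G : SimpleGraph V} [DecidableRel G.Adj]
    {pq : Finset V × Finset V} : pq ∈ G.disjointIndepPairs ↔
      (G.IsNIndepSet 2 pq.1 ∧ G.IsNIndepSet 2 pq.2) ∧ Disjoint pq.1 pq.2 := by
  simp [disjointIndepPairs]

theorem indepSetFinset_eq_empty_of_card_lt (G : SimpleGraph V) [DecidableRel G.Adj] {n : ℕ}
    (hn : Fintype.card V < n) : G.indepSetFinset n = ∅ := by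
  rw [indepSetFinset_eq_cliqueFinset_compl, cliqueFinset_eq_empty_iff]
  exact cliqueFree_of_card_lt hn

theorem disjointIndepPairs_eq_empty_of_card_lt (G : SimpleGraph V) [DecidableRel G.Adj]
    (hV : Fintype.card V < 4) : G.disjointIndepPairs = ∅ := by
  refine eq_empty_of_forall_notMem fun ⟨p, q⟩ hpq => ?_
  obtain ⟨⟨hp, hq⟩, hdisj⟩ := mem_disjointIndepPairs.1 hpq
  have := card_le_univ (p ∪ q)
  rw [card_union_of_disjoint hdisj, hp.card_eq, hq.card_eq] at this
  omega

theorem sum_degree_sq_eq (G : SimpleGraph V) [DecidableRel G.Adj] :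
    ∑ v, (G.degree v : ℤ) ^ 2 =
      Fintype.card V * (Fintype.card V - 1) ^ 2
        - 4 * (Fintype.card V - 1) * #(G.indepSetFinset 2)
        + #(G.indepSetFinset 2) ^ 2 + #(G.indepSetFinset 2) - #G.disjointIndepPairs := by
  have hdeg (v : V) :
      (G.degree v : ℤ) = (Fintype.card V - 1) - #{p ∈ G.indepSetFinset 2 | v ∈ p} := by
    have := card_filter_mem_indepSetFinset_two_add_degree G v
    have := Fintype.card_pos_iff.2 ⟨v⟩
    omega
  set 𝓔 := G.indepSetFinset 2
  have h𝓔 : ∀ p ∈ 𝓔, #p = 2 := fun p hp => (mem_indepSetFinset_iff.1 hp).card_eq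
  have hsum : (∑ v, #{p ∈ 𝓔 | v ∈ p} : ℤ) = 2 * #𝓔 := by
    exact_mod_cast sum_card_filter_mem_of_card_eq_two 𝓔 h𝓔
  have hsq : (∑ v, #{p ∈ 𝓔 | v ∈ p} ^ 2 : ℤ) + #G.disjointIndepPairs = #𝓔 ^ 2 + #𝓔 := by
    exact_mod_cast sum_card_filter_mem_sq_add_card_filter_disjoint 𝓔 h𝓔
  simp only [hdeg, sub_sq, sum_add_distrib, sum_sub_distrib, ← mul_sum, sum_const,
    card_univ, nsmul_eq_mul]
  linear_combination (-2 * ((Fintype.card V : ℤ) - 1)) * hsum + hsq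

end SimpleGraph

section ColorClass

variable {V β : Type*} [Fintype V] [DecidableEq β]

def colorClass (κ : V → β) (i : β) : Finset V := {v | κ v = i}

@[simp] theorem mem_colorClass {κ : V → β} {i : β} {v : V} : v ∈ colorClass κ i ↔ κ v = i := by
  simp [colorClass]

theorem sum_card_colorClass [Fintype β] (κ : V → β) : ∑ i, #(colorClass κ i) = Fintype.card V :=
  (card_eq_sum_card_fiberwise fun _ _ => mem_univ _).symm

theorem forall_adj_ne_iff_isIndepSet_colorClass (G : SimpleGraph V) (κ : V → β) :
    (∀ u w, G.Adj u w → κ u ≠ κ w) ↔ ∀ i, G.IsIndepSet (colorClass κ i : Set V) := by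
  refine ⟨fun h i u hu w hw _ hadj => h u w hadj ?_, fun h u w hadj heq => ?_⟩
  · rw [mem_coe, mem_colorClass] at hu hw
    rw [hu, hw]
  · exact h (κ w) (by simp [heq]) (by simp) (G.ne_of_adj hadj) hadj

theorem colorClass_mem_indepSetFinset_two [DecidableEq V] (G : SimpleGraph V) [DecidableRel G.Adj]
    {κ : V → β} (hκ : ∀ u w, G.Adj u w → κ u ≠ κ w) {c : β} (hc : #(colorClass κ c) = 2) :
    colorClass κ c ∈ G.indepSetFinset 2 :=
  mem_indepSetFinset_iff.2 ⟨(forall_adj_ne_iff_isIndepSet_colorClass G κ).1 hκ c, hc⟩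

variable {C : Finset β} {P : β → Finset V} {κ : V → β}

theorem apply_notMem_of_colorClass_eq (hfib : ∀ c ∈ C, colorClass κ c = P c) {v : V}
    (hv : ∀ c ∈ C, v ∉ P c) : κ v ∉ C :=
  fun hC => hv _ hC (by simp [← hfib _ hC])

theorem bijective_restrict_of_colorClass_eq (hfib : ∀ c ∈ C, colorClass κ c = P c)
    (hone : ∀ i ∉ C, #(colorClass κ i) = 1) :
    Function.Bijective fun v : {v // ∀ c ∈ C, v ∉ P c} =>
      (⟨κ v, apply_notMem_of_colorClass_eq hfib v.2⟩ : {i // i ∉ C}) := by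
  refine ⟨fun a b hab => ?_, fun ⟨i, hi⟩ => ?_⟩
  · have hab : κ a = κ b := congrArg Subtype.val hab
    exact Subtype.ext <| card_le_one.1 (hone _ (apply_notMem_of_colorClass_eq hfib a.2)).le
      a (by simp) b (by simp [hab])
  · obtain ⟨w, hw⟩ := card_eq_one.1 (hone i hi)
    have hwi : κ w = i := mem_colorClass.1 (hw ▸ mem_singleton_self w)
    refine ⟨⟨w, fun c hc hwc => hi ?_⟩, Subtype.ext hwi⟩
    rw [← hfib c hc, mem_colorClass, hwi] at hwc
    exact hwc ▸ hc

variable [DecidableEq V]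

theorem colorClass_extend (κ₀ : V → β) (hκ₀ : ∀ c ∈ C, ∀ v ∈ P c, κ₀ v = c)
    (e : {v // ∀ c ∈ C, v ∉ P c} ≃ {i // i ∉ C}) :
    let κ := fun v => if h : ∀ c ∈ C, v ∉ P c then (e ⟨v, h⟩ : β) else κ₀ v
    (∀ c ∈ C, colorClass κ c = P c) ∧ ∀ i ∉ C, #(colorClass κ i) = 1 := by
  intro κ
  have hfree (v : V) (h : ∀ c ∈ C, v ∉ P c) : κ v = e ⟨v, h⟩ := dif_pos h
  have hbound (v : V) (c : β) (hc : c ∈ C) (hv : v ∈ P c) : κ v = c :=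
    (dif_neg fun h => h c hc hv).trans (hκ₀ c hc v hv)
  refine ⟨fun c hc => ?_, fun i hi => card_eq_one.2 ⟨e.symm ⟨i, hi⟩, ?_⟩⟩
  · ext v
    rw [mem_colorClass]
    by_cases h : ∀ c ∈ C, v ∉ P c
    · rw [hfree v h]
      exact iff_of_false (fun hvc => (e ⟨v, h⟩).2 (hvc ▸ hc)) (h c hc)
    · push Not at h
      obtain ⟨c', hc', hv⟩ := h
      rw [hbound v c' hc' hv]
      refine ⟨fun h => h ▸ hv, fun hvc => ?_⟩
      rw [← hκ₀ c hc v hvc, hκ₀ c' hc' v hv]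
  · ext v
    rw [mem_colorClass, mem_singleton]
    by_cases h : ∀ c ∈ C, v ∉ P c
    · rw [hfree v h]
      simpa [Subtype.ext_iff] using (e.eq_symm_apply (x := ⟨i, hi⟩) (y := ⟨v, h⟩)).symm
    · push Not at h
      obtain ⟨c', hc', hv⟩ := h
      rw [hbound v c' hc' hv]
      exact iff_of_false (fun h => hi (h ▸ hc')) (fun h => (e.symm ⟨i, hi⟩).2 c' hc' (h ▸ hv))

-- `κ₀` witnesses that the prescribed classes `P c`, `c ∈ C`, are pairwise disjoint.
theorem card_colorClass_eq_and_card_colorClass_eq_one [Fintype β] (κ₀ : V → β)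
    (hκ₀ : ∀ c ∈ C, ∀ v ∈ P c, κ₀ v = c) (hcard : #{v | ∀ c ∈ C, v ∉ P c} = #Cᶜ) :
    #{κ : V → β | (∀ c ∈ C, colorClass κ c = P c) ∧ ∀ i ∉ C, #(colorClass κ i) = 1} = (#Cᶜ)! := by
  have hfree : Fintype.card {v // ∀ c ∈ C, v ∉ P c} = Fintype.card {i // i ∉ C} := by
    rw [Fintype.card_subtype, hcard, Fintype.card_subtype_compl, Fintype.card_coe, card_compl]
  rw [← Fintype.card_subtype, ← hcard, ← Fintype.card_subtype,
    ← Fintype.card_equiv (Fintype.equivOfCardEq hfree)]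
  refine Fintype.card_congr
    { toFun := fun κ => Equiv.ofBijective _ (bijective_restrict_of_colorClass_eq κ.2.1 κ.2.2)
      invFun := fun e => ⟨_, colorClass_extend κ₀ hκ₀ e⟩
      left_inv := fun κ => Subtype.ext <| funext fun v => ?_
      right_inv := fun e => Equiv.ext fun v => Subtype.ext (dif_pos v.2) }
  by_cases h : ∀ c ∈ C, v ∉ P c
  · exact dif_pos h
  · push Not at h
    obtain ⟨c, hc, hv⟩ := h
    refine (dif_neg fun h => h c hc hv).trans ?_
    rw [hκ₀ c hc v hv, eq_comm, ← mem_colorClass, κ.2.1 c hc]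
    exact hv

end ColorClass

section ProperColoring

variable {V β : Type*} [Fintype V] [DecidableEq V] [Fintype β] [DecidableEq β]
  (G : SimpleGraph V) [DecidableRel G.Adj]

theorem card_proper_colorClass_eq_of_isNIndepSet (C : Finset β) (P : β → Finset V) (κ₀ : V → β)
    (hκ₀ : ∀ c ∈ C, ∀ v ∈ P c, κ₀ v = c) (hcard : #{v | ∀ c ∈ C, v ∉ P c} = #Cᶜ)
    (m : β → ℕ) (hm : ∀ i ∉ C, m i = 1) (hP : ∀ c ∈ C, G.IsNIndepSet (m c) (P c)) :
    #{κ ∈ {κ : V → β | (∀ u w, G.Adj u w → κ u ≠ κ w) ∧ ∀ i, #(colorClass κ i) = m i} |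
      ∀ c ∈ C, colorClass κ c = P c} = (#Cᶜ)! := by
  rw [← card_colorClass_eq_and_card_colorClass_eq_one κ₀ hκ₀ hcard, filter_filter]
  congr 1
  refine filter_congr fun κ _ => ⟨fun ⟨⟨_, hsize⟩, hfib⟩ => ⟨hfib, fun i hi => hm i hi ▸ hsize i⟩,
    fun ⟨hfib, hone⟩ => ⟨⟨?_, fun i => ?_⟩, hfib⟩⟩
  · refine (forall_adj_ne_iff_isIndepSet_colorClass G κ).2 fun i => ?_
    by_cases hi : i ∈ C
    · exact hfib i hi ▸ (hP i hi).isIndepSet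
    · exact fun u hu w hw huw => absurd (card_le_one.1 (hone i hi).le u hu w hw) huw
  · by_cases hi : i ∈ C
    · rw [hfib i hi, (hP i hi).card_eq]
    · rw [hone i hi, hm i hi]

theorem card_proper_colorClass_two_one (c₀ : β) (hβ : Fintype.card β + 1 = Fintype.card V) :
    #{κ : V → β | (∀ u w, G.Adj u w → κ u ≠ κ w) ∧
      ∀ i, #(colorClass κ i) = if i = c₀ then 2 else 1} =
      #(G.indepSetFinset 2) * (Fintype.card β - 1)! := by
  rw [card_eq_sum_card_fiberwise (f := fun κ => colorClass κ c₀) (t := G.indepSetFinset 2)]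
  · refine sum_const_nat fun p hp => ?_
    rw [mem_indepSetFinset_iff] at hp
    have hcard : #{v | ∀ c ∈ ({c₀} : Finset β), v ∉ p} = #({c₀} : Finset β)ᶜ := by
      simp only [mem_singleton, forall_eq, filter_notMem_eq_sdiff, card_univ_sdiff, card_compl,
        card_singleton, hp.card_eq]
      omega
    simpa [card_compl] using card_proper_colorClass_eq_of_isNIndepSet G {c₀} (fun _ => p)
      (fun _ => c₀) (by simp) hcard (fun i => if i = c₀ then 2 else 1) (by simp +contextual)
      (by simpa using hp)
  · intro κ hκ
    rw [mem_coe, mem_filter] at hκ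
    exact colorClass_mem_indepSetFinset_two G hκ.2.1 (by simpa using hκ.2.2 c₀)

theorem card_proper_colorClass_two_two_one {c₀ c₁ : β} (h01 : c₀ ≠ c₁)
    (hβ : Fintype.card β + 2 = Fintype.card V) :
    #{κ : V → β | (∀ u w, G.Adj u w → κ u ≠ κ w) ∧
      ∀ i, #(colorClass κ i) = if i = c₀ ∨ i = c₁ then 2 else 1} =
      #G.disjointIndepPairs * (Fintype.card β - 2)! := by
  rw [card_eq_sum_card_fiberwise (f := fun κ => (colorClass κ c₀, colorClass κ c₁))
    (t := G.disjointIndepPairs)]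
  · refine sum_const_nat fun ⟨p, q⟩ hpq => ?_
    rw [mem_disjointIndepPairs] at hpq
    obtain ⟨⟨hp, hq⟩, hdisj⟩ := hpq
    have hcard : #{v | ∀ c ∈ ({c₀, c₁} : Finset β), v ∉ (if c = c₀ then p else q)} =
        #({c₀, c₁} : Finset β)ᶜ := by
      have : ({v | ∀ c ∈ ({c₀, c₁} : Finset β), v ∉ (if c = c₀ then p else q)} : Finset V) =
          univ \ (p ∪ q) := by
        ext v
        simp [h01.symm, not_or]
      rw [this, card_univ_sdiff, card_union_of_disjoint hdisj, card_compl, card_pair h01,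
        hp.card_eq, hq.card_eq]
      omega
    have hκ₀ : ∀ c ∈ ({c₀, c₁} : Finset β), ∀ v ∈ (if c = c₀ then p else q),
        (if v ∈ p then c₀ else c₁) = c := by
      intro c hc v hv
      rw [mem_insert, mem_singleton] at hc
      rcases hc with rfl | rfl
      · simp_all
      · have hvq : v ∉ p := disjoint_right.1 hdisj (by simpa [h01.symm] using hv)
        simp [hvq]
    have := card_proper_colorClass_eq_of_isNIndepSet G {c₀, c₁} (fun c => if c = c₀ then p else q)
      (fun v => if v ∈ p then c₀ else c₁) hκ₀ hcard
      (fun i => if i = c₀ ∨ i = c₁ then 2 else 1) (by simp +contextual) (by simp [h01.symm, hp, hq])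
    rw [card_compl, card_pair h01] at this
    simpa [h01.symm] using this
  · intro κ hκ
    rw [mem_coe, mem_filter] at hκ
    simp only [mem_coe, disjointIndepPairs, mem_filter, mem_product]
    refine ⟨⟨colorClass_mem_indepSetFinset_two G hκ.2.1 (by simpa using hκ.2.2 c₀),
      colorClass_mem_indepSetFinset_two G hκ.2.1 (by simpa using hκ.2.2 c₁)⟩, ?_⟩
    exact disjoint_left.2 fun v hv₀ hv₁ =>
      h01 ((mem_colorClass.1 hv₀).symm.trans (mem_colorClass.1 hv₁))

end ProperColoring

section CSF

variable {V β : Type*} [Fintype V] [DecidableEq β]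

theorem sum_single_eq_equivFunOnFinite_symm_iff [Fintype β] (κ : V → β) (m : β → ℕ) :
    ∑ v, Finsupp.single (κ v) 1 = Finsupp.equivFunOnFinite.symm m ↔
      ∀ i, #(colorClass κ i) = m i := by
  simp only [Finsupp.ext_iff, Finsupp.finsetSum_apply, Finsupp.single_apply,
    Finsupp.coe_equivFunOnFinite_symm, colorClass, card_filter]

theorem coeff_csf [DecidableEq V] (G : SimpleGraph V) [DecidableRel G.Adj] (n : ℕ) (m : Fin n → ℕ) :
    (csf G n).coeff (Finsupp.equivFunOnFinite.symm m) =
      #{κ : V → Fin n | (∀ u w, G.Adj u w → κ u ≠ κ w) ∧ ∀ i, #(colorClass κ i) = m i} := by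
  have hprod (κ : V → Fin n) : ∏ v, (MvPolynomial.X (κ v) : MvPolynomial (Fin n) ℤ) =
      MvPolynomial.monomial (∑ v, Finsupp.single (κ v) 1) 1 := by
    rw [MvPolynomial.monomial_sum_one]
    rfl
  simp only [csf, MvPolynomial.coeff_sum, apply_ite (MvPolynomial.coeff _), hprod,
    MvPolynomial.coeff_monomial, MvPolynomial.coeff_zero, sum_single_eq_equivFunOnFinite_symm_iff]
  rw [← sum_boole]
  congr! 1 with κ
  -- `csf` is defined classically, so its `univ` carries another `Fintype` instance.
  · exact congrArg (@univ _) (Subsingleton.elim _ _)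
  · split_ifs <;> simp_all

variable {W : Type*} [Fintype W] [DecidableEq V] [DecidableEq W]
  {G : SimpleGraph V} {H : SimpleGraph W} [DecidableRel G.Adj] [DecidableRel H.Adj]

theorem card_proper_colorClass_eq_of_csf_eq (h : ∀ n, csf G n = csf H n) (n : ℕ)
    (m : Fin n → ℕ) :
    #{κ : V → Fin n | (∀ u w, G.Adj u w → κ u ≠ κ w) ∧ ∀ i, #(colorClass κ i) = m i} =
      #{κ : W → Fin n | (∀ u w, H.Adj u w → κ u ≠ κ w) ∧ ∀ i, #(colorClass κ i) = m i} := by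
  have := coeff_csf G n m
  rw [h n, coeff_csf H n m] at this
  exact_mod_cast this.symm

theorem card_eq_of_csf_eq (h : ∀ n, csf G n = csf H n) : Fintype.card V = Fintype.card W := by
  set e := Fintype.equivFin V
  have hclass (i : Fin (Fintype.card V)) : colorClass e i = {e.symm i} := by
    ext v
    simp [Equiv.eq_symm_apply]
  have hG : (e : V → Fin (Fintype.card V)) ∈
      ({κ | (∀ u w, G.Adj u w → κ u ≠ κ w) ∧ ∀ i, #(colorClass κ i) = 1} : Finset _) := by
    simp only [mem_filter, mem_univ, true_and, hclass, card_singleton, implies_true, and_true]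
    exact fun u w huw heq => G.ne_of_adj huw (e.injective heq)
  obtain ⟨κ, hκ⟩ : ({κ : W → Fin (Fintype.card V) | (∀ u w, H.Adj u w → κ u ≠ κ w) ∧
      ∀ i, #(colorClass κ i) = 1} : Finset _).Nonempty := by
    rw [← card_pos, ← card_proper_colorClass_eq_of_csf_eq h]
    exact card_pos.2 ⟨_, hG⟩
  rw [← sum_card_colorClass κ, sum_congr rfl fun i _ => (mem_filter.1 hκ).2.2 i]
  simp

theorem card_indepSetFinset_two_eq_of_csf_eq (h : ∀ n, csf G n = csf H n) :
    #(G.indepSetFinset 2) = #(H.indepSetFinset 2) := by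
  have hN := card_eq_of_csf_eq h
  rcases lt_or_ge (Fintype.card V) 2 with hlt | hge
  · rw [indepSetFinset_eq_empty_of_card_lt G hlt, indepSetFinset_eq_empty_of_card_lt H (hN ▸ hlt),
      card_empty, card_empty]
  · set c₀ : Fin (Fintype.card V - 1) := ⟨0, by omega⟩
    have hG := card_proper_colorClass_two_one G c₀ (by simp; omega)
    have hH := card_proper_colorClass_two_one H c₀ (by simp; omega)
    refine Nat.eq_of_mul_eq_mul_right (Nat.factorial_pos _) (hG.symm.trans (Eq.trans ?_ hH))
    -- The two sides decide `∀ i : Fin _` through different instances.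
    convert card_proper_colorClass_eq_of_csf_eq h _ fun i => if i = c₀ then 2 else 1

theorem card_disjointIndepPairs_eq_of_csf_eq (h : ∀ n, csf G n = csf H n) :
    #G.disjointIndepPairs = #H.disjointIndepPairs := by
  have hN := card_eq_of_csf_eq h
  rcases lt_or_ge (Fintype.card V) 4 with hlt | hge
  · rw [disjointIndepPairs_eq_empty_of_card_lt G hlt,
      disjointIndepPairs_eq_empty_of_card_lt H (hN ▸ hlt), card_empty, card_empty]
  · set c₀ : Fin (Fintype.card V - 2) := ⟨0, by omega⟩
    set c₁ : Fin (Fintype.card V - 2) := ⟨1, by omega⟩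
    have h01 : c₀ ≠ c₁ := by simp [c₀, c₁, Fin.ext_iff]
    have hG := card_proper_colorClass_two_two_one G h01 (by simp; omega)
    have hH := card_proper_colorClass_two_two_one H h01 (by simp; omega)
    refine Nat.eq_of_mul_eq_mul_right (Nat.factorial_pos _) (hG.symm.trans (Eq.trans ?_ hH))
    convert card_proper_colorClass_eq_of_csf_eq h _ fun i => if i = c₀ ∨ i = c₁ then 2 else 1

end CSF

/-- If two finite simple graphs have the same chromatic symmetric function, then the
sums of the squares of their vertex degrees agree. -/
theorem sum_degree_sq_eq_of_csf_eq {V W : Type*} [Fintype V] [Fintype W]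
    (G : SimpleGraph V) (H : SimpleGraph W) [DecidableRel G.Adj] [DecidableRel H.Adj]
    (h : ∀ n, csf G n = csf H n) :
    ∑ v : V, (G.degree v) ^ 2 = ∑ w : W, (H.degree w) ^ 2 := by
  classical
  have hZ : ∑ v, (G.degree v : ℤ) ^ 2 = ∑ w, (H.degree w : ℤ) ^ 2 := by
    rw [sum_degree_sq_eq, sum_degree_sq_eq, card_eq_of_csf_eq h,
      card_indepSetFinset_two_eq_of_csf_eq h, card_disjointIndepPairs_eq_of_csf_eq h]
  exact_mod_cast hZ
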